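/- Assume that at least one test object for (𝓢',𝓢) exists. If u ∈ 𝓢' is a tempered distribution such that ι(u) : Φ ↦ Φ(u) is negligible, then u = 0. In other words, ι(𝓢') intersects the space of negligible maps only in 0, so the embedding ι of 𝓢' into the quotient 𝓖_τ is injective. -/

import Mathlib

open MeasureTheory SchwartzMap Filter Topology Bornology Complex

noncomputable section

/-- The Schwartz space `𝓢(ℝⁿ, ℂ)`. -/
abbrev Sch (n : ℕ) := SchwartzMap (EuclideanSpace ℝ (Fin n)) ℂ

/-- The space `𝓢'` of tempered distributions, i.e. the continuous linear functionals on `𝓢`,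
endowed (by Mathlib's default instance) with the strong topology of uniform convergence on
bounded subsets of `𝓢`. -/
abbrev SchDual (n : ℕ) := Sch n →L[ℂ] ℂ

/-- The canonical embedding `j : 𝓢 → 𝓢'`, `j(f)(g) = ∫ f(x) g(x) dx`. -/
def jEmb {n : ℕ} (f : Sch n) : SchDual n := by
  refine SchwartzMap.mkCLMtoNormedSpace (fun g : Sch n => ∫ x, f x * g x) ?_ ?_ ?_
  · intro g h
    have hg : Integrable (fun x => f x * g x) volume :=
      g.integrable.bdd_mul f.continuous.aestronglyMeasurable
        (ae_of_all _ fun x => f.norm_le_seminorm ℂ x)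
    have hh : Integrable (fun x => f x * h x) volume :=
      h.integrable.bdd_mul f.continuous.aestronglyMeasurable
        (ae_of_all _ fun x => f.norm_le_seminorm ℂ x)
    simp only [SchwartzMap.add_apply, mul_add]
    exact integral_add hg hh
  · intro a g
    simp only [SchwartzMap.smul_apply, smul_eq_mul, RingHom.id_apply]
    rw [← integral_const_mul]
    congr 1; funext x; ring
  · refine ⟨{(0, 0)}, ∫ x, ‖f x‖, integral_nonneg (fun x => norm_nonneg _), fun g => ?_⟩
    refine (norm_integral_le_integral_norm _).trans ?_
    have : ∀ x, ‖f x * g x‖ ≤ ‖f x‖ * (SchwartzMap.seminorm ℂ 0 0) g := by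
      intro x
      rw [norm_mul]
      exact mul_le_mul_of_nonneg_left (g.norm_le_seminorm ℂ x) (norm_nonneg _)
    refine (integral_mono_of_nonneg (Eventually.of_forall fun x => norm_nonneg _)
      (f.integrable.norm.mul_const _) (Eventually.of_forall this)).trans ?_
    rw [integral_mul_const]
    simp [schwartzSeminormFamily]

/-- The filter describing `ε → 0` with `ε ∈ (0,1]`. -/
def zeroFilter : Filter ℝ := nhdsWithin 0 (Set.Ioc 0 1)

/-- A *test object* for `(𝓢', 𝓢)`: a net `(Φ_ε)` of continuous linear maps `𝓢' → 𝓢` such that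
(ii) `j ∘ Φ_ε → id` in `L_b(𝓢',𝓢')`, (iii) `sup_{f ∈ B} q(Φ_ε (j f) - f) = O(ε^m)` for every
`m ∈ ℕ`, every bounded `B ⊆ 𝓢` and every seminorm `q` of `𝓢`, and (iv) for every bounded
`B' ⊆ 𝓢'` and every seminorm `q` of `𝓢` there is `N` with `sup_{u ∈ B'} q(Φ_ε u) = O(ε^{-N})`.
(The strong topology of `L_b(𝓢',𝓢')`, resp. its seminorms, are spelled out via uniform
convergence on bounded sets, the seminorms of `𝓢'` being suprema over bounded subsets of `𝓢`.) -/
structure IsTestObject {n : ℕ} (Φ : ℝ → (SchDual n →L[ℂ] Sch n)) : Prop where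
  tendsto_id : ∀ B' : Set (SchDual n), IsVonNBounded ℂ B' →
    ∀ B : Set (Sch n), IsVonNBounded ℂ B → ∀ δ > (0:ℝ), ∀ᶠ ε in zeroFilter,
      ∀ u ∈ B', ∀ g ∈ B, ‖jEmb (Φ ε u) g - u g‖ < δ
  negligible_on_Sch : ∀ m : ℕ, ∀ B : Set (Sch n), IsVonNBounded ℂ B → ∀ k l : ℕ,
    ∃ C : ℝ, ∀ᶠ ε in zeroFilter, ∀ f ∈ B,
      SchwartzMap.seminorm ℂ k l (Φ ε (jEmb f) - f) ≤ C * ε ^ m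
  moderate : ∀ B' : Set (SchDual n), IsVonNBounded ℂ B' → ∀ k l : ℕ,
    ∃ N : ℕ, ∃ C : ℝ, ∀ᶠ ε in zeroFilter, ∀ u ∈ B',
      SchwartzMap.seminorm ℂ k l (Φ ε u) ≤ C / ε ^ N

/-- A *0-test object* for `(𝓢', 𝓢)`: as `IsTestObject`, but with `j ∘ Φ_ε → 0` in
`L_b(𝓢',𝓢')` in (ii') and `sup_{f ∈ B} q(Φ_ε (j f)) = O(ε^m)` in (iii'). -/
structure IsZeroTestObject {n : ℕ} (Φ : ℝ → (SchDual n →L[ℂ] Sch n)) : Prop where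
  tendsto_zero : ∀ B' : Set (SchDual n), IsVonNBounded ℂ B' →
    ∀ B : Set (Sch n), IsVonNBounded ℂ B → ∀ δ > (0:ℝ), ∀ᶠ ε in zeroFilter,
      ∀ u ∈ B', ∀ g ∈ B, ‖jEmb (Φ ε u) g‖ < δ
  negligible_on_Sch : ∀ m : ℕ, ∀ B : Set (Sch n), IsVonNBounded ℂ B → ∀ k l : ℕ,
    ∃ C : ℝ, ∀ᶠ ε in zeroFilter, ∀ f ∈ B,
      SchwartzMap.seminorm ℂ k l (Φ ε (jEmb f)) ≤ C * ε ^ m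
  moderate : ∀ B' : Set (SchDual n), IsVonNBounded ℂ B' → ∀ k l : ℕ,
    ∃ N : ℕ, ∃ C : ℝ, ∀ᶠ ε in zeroFilter, ∀ u ∈ B',
      SchwartzMap.seminorm ℂ k l (Φ ε u) ≤ C / ε ^ N

/-- An element `R` of the basic space (with discrete dependence) is *moderate* if for every
seminorm `q` of `𝓢` there is `N ∈ ℕ` such that for every test object `(Φ_ε)` one has
`q(R(Φ_ε)) = O(ε^{-N})` as `ε → 0`. -/
def Moderate {n : ℕ} (R : (SchDual n →L[ℂ] Sch n) → Sch n) : Prop :=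
  ∀ k l : ℕ, ∃ N : ℕ, ∀ Φ : ℝ → (SchDual n →L[ℂ] Sch n), IsTestObject Φ →
    ∃ C : ℝ, ∀ᶠ ε in zeroFilter, SchwartzMap.seminorm ℂ k l (R (Φ ε)) ≤ C / ε ^ N

/-- An element `R` of the basic space (with discrete dependence) is *negligible* if for every
seminorm `q` of `𝓢`, every `m ∈ ℕ` and every test object `(Φ_ε)` one has
`q(R(Φ_ε)) = O(ε^m)` as `ε → 0`. -/
def Negligible {n : ℕ} (R : (SchDual n →L[ℂ] Sch n) → Sch n) : Prop :=
  ∀ k l : ℕ, ∀ m : ℕ, ∀ Φ : ℝ → (SchDual n →L[ℂ] Sch n), IsTestObject Φ →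
    ∃ C : ℝ, ∀ᶠ ε in zeroFilter, SchwartzMap.seminorm ℂ k l (R (Φ ε)) ≤ C * ε ^ m

/-- Assume at least one test object for `(𝓢',𝓢)` exists. If `u ∈ 𝓢'` is a tempered
distribution such that `ι(u) : Φ ↦ Φ(u)` is negligible, then `u = 0`; that is, `ι(𝓢')`
intersects the space of negligible maps only in `0`, so the induced embedding of `𝓢'` into the
quotient `𝓖_τ` is injective. -/
theorem iota_injective (n : ℕ) (hn : 0 < n)
    (hexists : ∃ Φ : ℝ → (SchDual n →L[ℂ] Sch n), IsTestObject Φ)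
    (u : SchDual n) (hu : Negligible (fun Φ : SchDual n →L[ℂ] Sch n => Φ u)) :
    u = 0 := by
  obtain ⟨Φ, hΦ⟩ := hexists
  have hNeBot : (zeroFilter).NeBot := by
    rw [zeroFilter, ← mem_closure_iff_nhdsWithin_neBot, closure_Ioc (one_ne_zero).symm]
    exact ⟨le_refl 0, zero_le_one⟩
  ext g
  simp only [ContinuousLinearMap.zero_apply]
  by_contra hne
  have hδpos : (0:ℝ) < ‖u g‖ := norm_pos_iff.mpr hne
  obtain ⟨C, hC⟩ := hu 0 0 1 Φ hΦ
  have hB' : IsVonNBounded ℂ ({u} : Set (SchDual n)) :=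
    Bornology.isVonNBounded_singleton u
  have hB : IsVonNBounded ℂ ({g} : Set (Sch n)) :=
    Bornology.isVonNBounded_singleton g
  have h1 := hΦ.tendsto_id _ hB' _ hB (‖u g‖/2) (by positivity)
  -- bound ‖jEmb f g‖ by the sup norm of f times ∫ ‖g‖
  have hbound : ∀ f : Sch n, ‖jEmb f g‖ ≤ SchwartzMap.seminorm ℂ 0 0 f * ∫ x, ‖g x‖ := by
    intro f
    have h0 : jEmb f g = ∫ x, f x * g x := rfl
    rw [h0]
    refine (norm_integral_le_integral_norm _).trans ?_
    have hpt : ∀ x, ‖f x * g x‖ ≤ SchwartzMap.seminorm ℂ 0 0 f * ‖g x‖ := by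
      intro x
      rw [norm_mul]
      exact mul_le_mul_of_nonneg_right (f.norm_le_seminorm ℂ x) (norm_nonneg _)
    refine (integral_mono_of_nonneg (Eventually.of_forall fun x => norm_nonneg _)
      (g.integrable.norm.const_mul _) (Eventually.of_forall hpt)).trans ?_
    rw [integral_const_mul]
  -- C * ε * ∫‖g‖ tends to 0
  have hε : Tendsto (fun ε : ℝ => C * ε ^ 1 * (∫ x, ‖g x‖)) zeroFilter (𝓝 0) := by
    have h0 : Tendsto (fun ε : ℝ => ε) zeroFilter (𝓝 0) :=
      tendsto_id.mono_left nhdsWithin_le_nhds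
    have := ((h0.const_mul C).mul_const (∫ x, ‖g x‖))
    simpa using this
  have h2 : ∀ᶠ ε in zeroFilter, C * ε ^ 1 * (∫ x, ‖g x‖) < ‖u g‖/2 :=
    hε.eventually_lt_const (by positivity)
  have h3 := (h1.and (hC.and h2)).exists
  obtain ⟨ε, hid, hCε, hlt⟩ := h3
  have hid' := hid u (Set.mem_singleton u) g (Set.mem_singleton g)
  have hnorm : ‖jEmb (Φ ε u) g‖ ≤ C * ε ^ 1 * (∫ x, ‖g x‖) := by
    refine (hbound (Φ ε u)).trans ?_
    exact mul_le_mul_of_nonneg_right hCε (integral_nonneg fun x => norm_nonneg _)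
  have : ‖u g‖ ≤ ‖u g - jEmb (Φ ε u) g‖ + ‖jEmb (Φ ε u) g‖ := by
    simpa using norm_add_le (u g - jEmb (Φ ε u) g) (jEmb (Φ ε u) g)
  rw [norm_sub_rev] at this
  linarith [hnorm.trans_lt hlt, hid']

end
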